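/- arXiv:2208.13696 — 2 statements merged into one kernel-verified Lean document; each statement's English description precedes it below -/
import Mathlib

section
/- For any finite multiset of jobs with nonnegative sizes and any integer k ≥ 1, the optimal total completion time of the multiset on k machines is at most 3 times the optimal total completion time of the same multiset on 2k machines. -/
/-- The machine of minimum load, ties broken by lowest machine index. -/
noncomputable def bestMachine {m : ℕ} (hm : 0 < m) (ℓ : Fin m → ℝ) : Fin m :=
  (Finset.univ.filter fun i => ∀ j, ℓ i ≤ ℓ j).min' (by
    obtain ⟨i, -, hi⟩ := Finset.exists_min_image Finset.univ ℓ ⟨⟨0, hm⟩, Finset.mem_univ _⟩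
    exact ⟨i, Finset.mem_filter.mpr ⟨Finset.mem_univ _, fun j => hi j (Finset.mem_univ _)⟩⟩)

/-- One step of list scheduling: assign a job of size `s` to the best machine. -/
noncomputable def schedStep {m : ℕ} (hm : 0 < m) (ℓ : Fin m → ℝ) (s : ℝ) : Fin m → ℝ :=
  Function.update ℓ (bestMachine hm ℓ) (ℓ (bestMachine hm ℓ) + s)

/-- Machine loads after list-scheduling `jobs` starting from initial loads `ℓ`. -/
noncomputable def loadsAfter {m : ℕ} (hm : 0 < m) (ℓ : Fin m → ℝ) : List ℝ → (Fin m → ℝ)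
  | [] => ℓ
  | s :: rest => loadsAfter hm (schedStep hm ℓ s) rest

/-- The free time: minimum machine load after all jobs are assigned. -/
noncomputable def freeTime {m : ℕ} (hm : 0 < m) (ℓ : Fin m → ℝ) (jobs : List ℝ) : ℝ :=
  Finset.univ.inf' ⟨⟨0, hm⟩, Finset.mem_univ _⟩ (loadsAfter hm ℓ jobs)

/-- Total completion time of the list schedule. -/
noncomputable def totalCompletion {m : ℕ} (hm : 0 < m) (ℓ : Fin m → ℝ) : List ℝ → ℝ
  | [] => 0
  | s :: rest => (ℓ (bestMachine hm ℓ) + s) + totalCompletion hm (schedStep hm ℓ s) rest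

/-- The sequence of machines to which successive jobs are assigned. -/
noncomputable def assignSeq {m : ℕ} (hm : 0 < m) (ℓ : Fin m → ℝ) : List ℝ → List (Fin m)
  | [] => []
  | s :: rest => bestMachine hm ℓ :: assignSeq hm (schedStep hm ℓ s) rest

/-- The optimal free time of a multiset of jobs: min over orderings, zero initial loads. -/
noncomputable def optFreeTime {m : ℕ} (hm : 0 < m) (J : Multiset ℝ) : ℝ :=
  sInf {F | ∃ l : List ℝ, (l : Multiset ℝ) = J ∧ F = freeTime hm (fun _ => 0) l}

/-- The optimal total completion time of a multiset of jobs: min over orderings. -/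
noncomputable def optTotalCompletion {m : ℕ} (hm : 0 < m) (J : Multiset ℝ) : ℝ :=
  sInf {C | ∃ l : List ℝ, (l : Multiset ℝ) = J ∧ C = totalCompletion hm (fun _ => 0) l}

section Aux

variable {m : ℕ}

noncomputable def coeffSum : List (Fin m) → List ℝ → ℝ
  | b :: a, s :: l => s * (1 + ((a.count b : ℕ) : ℝ)) + coeffSum a l
  | _, _ => 0

lemma coeffSum_nil_left (l : List ℝ) : coeffSum ([] : List (Fin m)) l = 0 := by
  cases l <;> rfl

lemma coeffSum_nil_right (a : List (Fin m)) : coeffSum a [] = 0 := by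
  cases a <;> rfl

lemma coeffSum_cons (b : Fin m) (a : List (Fin m)) (s : ℝ) (l : List ℝ) :
    coeffSum (b :: a) (s :: l) = s * (1 + ((a.count b : ℕ) : ℝ)) + coeffSum a l := rfl

lemma filter_min_nonempty (hm : 0 < m) (ℓ : Fin m → ℝ) :
    (Finset.univ.filter fun i => ∀ j, ℓ i ≤ ℓ j).Nonempty := by
  obtain ⟨i, -, hi⟩ := Finset.exists_min_image Finset.univ ℓ ⟨⟨0, hm⟩, Finset.mem_univ _⟩
  exact ⟨i, Finset.mem_filter.mpr ⟨Finset.mem_univ _, fun j => hi j (Finset.mem_univ _)⟩⟩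

lemma bestMachine_le (hm : 0 < m) (ℓ : Fin m → ℝ) (j : Fin m) :
    ℓ (bestMachine hm ℓ) ≤ ℓ j := by
  have h := Finset.min'_mem (Finset.univ.filter fun i => ∀ j, ℓ i ≤ ℓ j)
    (filter_min_nonempty hm ℓ)
  rw [Finset.mem_filter] at h
  exact h.2 j

lemma sum_schedStep (hm : 0 < m) (ℓ : Fin m → ℝ) (s : ℝ) :
    ∑ h, schedStep hm ℓ s h = (∑ h, ℓ h) + s := by
  unfold schedStep
  rw [Finset.sum_update_of_mem (Finset.mem_univ _),
    Finset.sum_sdiff_eq_sub (Finset.singleton_subset_iff.mpr (Finset.mem_univ _))]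
  simp; ring

lemma assignSeq_length (hm : 0 < m) (ℓ : Fin m → ℝ) (l : List ℝ) :
    (assignSeq hm ℓ l).length = l.length := by
  induction l generalizing ℓ with
  | nil => rfl
  | cons s rest ih => simp [assignSeq, ih]

lemma tc_formula (hm : 0 < m) (ℓ : Fin m → ℝ) (l : List ℝ) :
    totalCompletion hm ℓ l =
      coeffSum (assignSeq hm ℓ l) l
        + ∑ h, ℓ h * (((assignSeq hm ℓ l).count h : ℕ) : ℝ) := by
  induction l generalizing ℓ with
  | nil => simp [totalCompletion, assignSeq, coeffSum_nil_right]
  | cons s rest ih =>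
    have hrec : totalCompletion hm ℓ (s :: rest)
        = (ℓ (bestMachine hm ℓ) + s) + totalCompletion hm (schedStep hm ℓ s) rest := rfl
    rw [hrec, ih, assignSeq, coeffSum_cons]
    set b := bestMachine hm ℓ with hb
    set a' := assignSeq hm (schedStep hm ℓ s) rest with ha'
    have e1 : ∑ h, schedStep hm ℓ s h * ((a'.count h : ℕ) : ℝ)
        = (∑ h, ℓ h * ((a'.count h : ℕ) : ℝ)) + s * ((a'.count b : ℕ) : ℝ) := by
      have hupd : ∀ h : Fin m, schedStep hm ℓ s h * ((a'.count h : ℕ) : ℝ)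
          = ℓ h * ((a'.count h : ℕ) : ℝ)
            + (if h = b then s * ((a'.count b : ℕ) : ℝ) else 0) := by
        intro h
        unfold schedStep
        rw [Function.update_apply, ← hb]
        by_cases hh : h = b <;> simp [hh] <;> ring
      rw [Finset.sum_congr rfl (fun h _ => hupd h), Finset.sum_add_distrib,
        Finset.sum_ite_eq' Finset.univ b (fun _ => s * ((a'.count b : ℕ) : ℝ))]
      simp
    have e2 : ∑ h, ℓ h * (((b :: a').count h : ℕ) : ℝ)
        = (∑ h, ℓ h * ((a'.count h : ℕ) : ℝ)) + ℓ b := by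
      have hcnt : ∀ h : Fin m, ℓ h * (((b :: a').count h : ℕ) : ℝ)
          = ℓ h * ((a'.count h : ℕ) : ℝ) + (if h = b then ℓ b else 0) := by
        intro h
        by_cases hh : h = b <;>
          simp [hh, List.count_cons, eq_comm] <;> ring
      rw [Finset.sum_congr rfl (fun h _ => hcnt h), Finset.sum_add_distrib,
        Finset.sum_ite_eq' Finset.univ b (fun _ => ℓ b)]
      simp
    rw [e1, e2]
    ring

lemma coeffSum_nonneg (a : List (Fin m)) (l : List ℝ) (hl : ∀ x ∈ l, 0 ≤ x) :
    0 ≤ coeffSum a l := by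
  induction a generalizing l with
  | nil => rw [coeffSum_nil_left]
  | cons b a ih =>
    cases l with
    | nil => rw [coeffSum_nil_right]
    | cons s l =>
      rw [coeffSum_cons]
      have h1 : 0 ≤ s := hl s List.mem_cons_self
      have h2 : 0 ≤ coeffSum a l := ih l (fun x hx => hl x (List.mem_cons_of_mem _ hx))
      positivity

lemma coeffSum_eq_sum (d : Fin m) (a : List (Fin m)) (l : List ℝ)
    (hlen : a.length = l.length) :
    coeffSum a l = ∑ j ∈ Finset.range l.length,
      l.getD j 0 * ((((a.drop j).count (a.getD j d) : ℕ)) : ℝ) := by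
  induction a generalizing l with
  | nil =>
    cases l with
    | nil => simp [coeffSum_nil_left]
    | cons s l => simp at hlen
  | cons b a ih =>
    cases l with
    | nil => simp at hlen
    | cons s l =>
      simp only [List.length_cons] at hlen ⊢
      rw [coeffSum_cons, Finset.sum_range_succ']
      simp only [List.getD_cons_succ, List.getD_cons_zero, List.drop_succ_cons,
        List.drop_zero]
      rw [ih l (by omega)]
      simp [List.count_cons_self, add_comm]

end Aux

section Upper

variable {m : ℕ}

lemma sum_range_getD (l : List ℝ) : ∑ j ∈ Finset.range l.length, l.getD j 0 = l.sum := by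
  induction l with
  | nil => simp
  | cons s l ih =>
    rw [List.length_cons, Finset.sum_range_succ']
    simp only [List.getD_cons_succ, List.getD_cons_zero, List.sum_cons]
    rw [ih]
    ring

lemma take_sum_eq (l : List ℝ) (i : ℕ) (hi : i ≤ l.length) :
    (l.take i).sum = ∑ j ∈ Finset.range i, l.getD j 0 := by
  have hlen : (l.take i).length = i := by simp [hi]
  have := sum_range_getD (l.take i)
  rw [hlen] at this
  rw [← this]
  refine Finset.sum_congr rfl fun j hj => ?_
  rw [Finset.mem_range] at hj
  simp [List.getD_eq_getElem?_getD, List.getElem?_take, hj]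

lemma double_sum_exchange (f : ℕ → ℝ) (n : ℕ) :
    ∑ i ∈ Finset.range n, ∑ j ∈ Finset.range i, f j
      = ∑ j ∈ Finset.range n, ((n - 1 - j : ℕ) : ℝ) * f j := by
  induction n with
  | zero => simp
  | succ n ih =>
    rw [Finset.sum_range_succ, ih, Finset.sum_range_succ]
    have h1 : ∀ j ∈ Finset.range n,
        ((n + 1 - 1 - j : ℕ) : ℝ) * f j = ((n - 1 - j : ℕ) : ℝ) * f j + f j := by
      intro j hj
      rw [Finset.mem_range] at hj
      have : (n + 1 - 1 - j : ℕ) = (n - 1 - j) + 1 := by omega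
      rw [this]
      push_cast
      ring
    rw [Finset.sum_congr rfl h1, Finset.sum_add_distrib]
    simp

lemma tc_upper (hm : 0 < m) (ℓ : Fin m → ℝ) (l : List ℝ) :
    totalCompletion hm ℓ l ≤ ∑ i ∈ Finset.range l.length,
      (((∑ h, ℓ h) + (l.take i).sum) / m + l.getD i 0) := by
  induction l generalizing ℓ with
  | nil => simp [totalCompletion]
  | cons s rest ih =>
    have hrec : totalCompletion hm ℓ (s :: rest)
        = (ℓ (bestMachine hm ℓ) + s) + totalCompletion hm (schedStep hm ℓ s) rest := rfl
    rw [hrec, List.length_cons, Finset.sum_range_succ']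
    have hbm : ℓ (bestMachine hm ℓ) ≤ (∑ h, ℓ h) / m := by
      rw [le_div_iff₀ (by exact_mod_cast hm)]
      calc ℓ (bestMachine hm ℓ) * m = ∑ _h : Fin m, ℓ (bestMachine hm ℓ) := by
            simp [Finset.sum_const, mul_comm]
        _ ≤ ∑ h, ℓ h := Finset.sum_le_sum fun j _ => bestMachine_le hm ℓ j
    have hih := ih (schedStep hm ℓ s)
    rw [sum_schedStep hm ℓ s] at hih
    have heq : ∀ i, (((∑ h, ℓ h) + ((s :: rest).take (i + 1)).sum) / m
          + (s :: rest).getD (i + 1) 0)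
        = (((∑ h, ℓ h) + s + (rest.take i).sum) / m + rest.getD i 0) := by
      intro i
      simp [List.take_succ_cons, add_assoc]
    simp only [heq, List.take_zero, List.sum_nil, add_zero, List.getD_cons_zero]
    linarith
  
lemma tc_upper_zero (hm : 0 < m) (l : List ℝ) :
    totalCompletion hm (fun _ => 0) l ≤ ∑ j ∈ Finset.range l.length,
      l.getD j 0 * (1 + ((l.length - 1 - j : ℕ) : ℝ) / m) := by
  refine (tc_upper hm _ l).trans (le_of_eq ?_)
  have h1 : ∀ i ∈ Finset.range l.length,
      (((∑ _h : Fin m, (0:ℝ)) + (l.take i).sum) / m + l.getD i 0)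
        = (∑ j ∈ Finset.range i, l.getD j 0) / m + l.getD i 0 := by
    intro i hi
    rw [Finset.mem_range] at hi
    rw [take_sum_eq l i (le_of_lt hi)]
    simp
  rw [Finset.sum_congr rfl h1, Finset.sum_add_distrib, ← Finset.sum_div,
    double_sum_exchange (fun j => l.getD j 0) l.length]
  rw [Finset.sum_div, ← Finset.sum_add_distrib]
  refine Finset.sum_congr rfl fun j hj => ?_
  ring

end Upper

section TopSum

lemma sum_take_le (x : List ℝ) (hx : ∀ e ∈ x, 0 ≤ e) (t : ℕ) : (x.take t).sum ≤ x.sum := by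
  conv_rhs => rw [← List.take_append_drop t x]
  rw [List.sum_append]
  have h0 : (0:ℝ) ≤ (x.drop t).sum :=
    List.sum_nonneg (fun e he => hx e (List.drop_subset _ _ he))
  linarith

lemma sum_take_mono (q : List ℝ) (hq : ∀ e ∈ q, 0 ≤ e) {t t' : ℕ} (h : t ≤ t') :
    (q.take t).sum ≤ (q.take t').sum := by
  have heq : q.take t = (q.take t').take t := by rw [List.take_take, min_eq_left h]
  rw [heq]
  exact sum_take_le _ (fun e he => hq e (List.take_subset _ _ he)) t

lemma sum_take_cons (q0 : ℝ) (q' : List ℝ) (hq0 : 0 ≤ q0) (hq' : ∀ e ∈ q', e ≤ q0)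
    (c : ℕ) : (q'.take c).sum ≤ ((q0 :: q').take c).sum := by
  cases c with
  | zero => simp
  | succ c =>
    rw [List.take_succ_cons, List.sum_cons]
    by_cases hlen : c < q'.length
    · rw [List.sum_take_succ q' c hlen]
      have h1 : q'[c] ≤ q0 := hq' _ (List.getElem_mem hlen)
      linarith
    · push_neg at hlen
      rw [List.take_of_length_le hlen, List.take_of_length_le (by omega)]
      linarith

lemma top_sum_bound : ∀ (q : List ℝ), q.Pairwise (· ≥ ·) → (∀ e ∈ q, 0 ≤ e) →
    ∀ N : Multiset ℝ, N ≤ (q : Multiset ℝ) →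
      N.sum ≤ (q.take (Multiset.card N)).sum := by
  intro q
  induction q with
  | nil =>
    intro _ _ N hN
    have : N = 0 := Multiset.le_zero.mp (by simpa using hN)
    simp [this]
  | cons q0 q' ih =>
    intro hq hpos N hN
    rw [List.pairwise_cons] at hq
    have hpos' : ∀ e ∈ q', 0 ≤ e := fun e he => hpos e (List.mem_cons_of_mem _ he)
    rw [← Multiset.cons_coe] at hN
    by_cases h0 : q0 ∈ N
    · obtain ⟨N', rfl⟩ : ∃ N', N = q0 ::ₘ N' := ⟨N.erase q0, (Multiset.cons_erase h0).symm⟩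
      have hN' : N' ≤ (q' : Multiset ℝ) := by
        have h := Multiset.erase_le_erase q0 hN
        rwa [Multiset.erase_cons_head, Multiset.erase_cons_head] at h
      rw [Multiset.sum_cons, Multiset.card_cons, List.take_succ_cons, List.sum_cons]
      have := ih hq.2 hpos' N' hN'
      linarith
    · have hN' : N ≤ (q' : Multiset ℝ) := by
        rw [Multiset.le_iff_count] at hN ⊢
        intro x
        rcases eq_or_ne x q0 with rfl | hx
        · simp [Multiset.count_eq_zero_of_notMem h0]
        · have := hN x
          rwa [Multiset.count_cons_of_ne hx] at this
      refine (ih hq.2 hpos' N hN').trans ?_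
      exact sum_take_cons q0 q' (hpos q0 List.mem_cons_self)
        (fun e he => hq.1 e he) _

end TopSum

section Core

variable {m : ℕ}

lemma getD_eq_getElem' {α : Type*} (l : List α) (d : α) {j : ℕ} (h : j < l.length) :
    l.getD j d = l[j] := by
  rw [List.getD_eq_getElem?_getD, List.getElem?_eq_getElem h, Option.getD_some]

lemma coeff_pos (d : Fin m) (a : List (Fin m)) {j : ℕ} (hj : j < a.length) :
    1 ≤ (a.drop j).count (a.getD j d) := by
  rw [List.drop_eq_getElem_cons hj, getD_eq_getElem' a d hj, List.count_cons_self]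
  omega

lemma coeff_strict (d : Fin m) (a : List (Fin m)) {i j : ℕ} (hij : i < j)
    (hj : j < a.length) (heq : a.getD i d = a.getD j d) :
    (a.drop j).count (a.getD j d) < (a.drop i).count (a.getD i d) := by
  have hi : i < a.length := lt_trans hij hj
  have key : a.drop i = (a.drop i).take (j - i) ++ a.drop j := by
    conv_lhs => rw [← List.take_append_drop (j - i) (a.drop i)]
    rw [List.drop_drop]
    congr 2
    omega
  rw [heq, key, List.count_append]
  have h1 : 1 ≤ ((a.drop i).take (j - i)).count (a.getD j d) := by
    obtain ⟨t, ht⟩ : ∃ t, j - i = t + 1 := ⟨j - i - 1, by omega⟩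
    rw [List.drop_eq_getElem_cons hi, ht, List.take_succ_cons,
      ← getD_eq_getElem' a d hi, heq, List.count_cons_self]
    omega
  omega

lemma coeff_card_le (hm : 0 < m) (a : List (Fin m)) (v : ℕ) :
    ((Finset.range a.length).filter
      (fun j => (a.drop j).count (a.getD j ⟨0, hm⟩) ≤ v)).card ≤ m * v := by
  classical
  set d : Fin m := ⟨0, hm⟩
  set S := (Finset.range a.length).filter
      (fun j => (a.drop j).count (a.getD j d) ≤ v) with hS
  have hmaps : ∀ j ∈ S, (a.getD j d, (a.drop j).count (a.getD j d))
      ∈ (Finset.univ : Finset (Fin m)) ×ˢ Finset.Icc 1 v := by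
    intro j hj
    rw [hS, Finset.mem_filter, Finset.mem_range] at hj
    exact Finset.mem_product.mpr ⟨Finset.mem_univ _,
      Finset.mem_Icc.mpr ⟨coeff_pos d a hj.1, hj.2⟩⟩
  have hinj : Set.InjOn (fun j => (a.getD j d, (a.drop j).count (a.getD j d))) S := by
    intro i hi j hj hij
    simp only [hS, Finset.coe_filter, Set.mem_setOf_eq, Finset.mem_range] at hi hj
    rw [Prod.mk.injEq] at hij
    obtain ⟨hfst, hsnd⟩ := hij
    rcases lt_trichotomy i j with h | h | h
    · exfalso
      have := coeff_strict d a h hj.1 hfst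
      omega
    · exact h
    · exfalso
      have := coeff_strict d a h hi.1 hfst.symm
      omega
  have := Finset.card_le_card_of_injOn _ hmaps hinj
  rwa [Finset.card_product, Finset.card_univ, Fintype.card_fin, Nat.card_Icc,
    Nat.add_sub_cancel] at this

lemma core_lower (hm : 0 < m) (q l : List ℝ) (a : List (Fin m))
    (hsort : q.Pairwise (· ≥ ·)) (hperm : l.Perm q) (hpos : ∀ e ∈ q, 0 ≤ e)
    (hlen : a.length = l.length) :
    ∑ r ∈ Finset.range q.length, ((r / m + 1 : ℕ) : ℝ) * q.getD r 0
      ≤ coeffSum a l := by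
  classical
  set d : Fin m := ⟨0, hm⟩ with hd
  set n := l.length with hn
  have hql : q.length = n := (hperm.length_eq).symm
  have hsum : q.sum = l.sum := hperm.sum_eq.symm
  set p : ℕ → ℝ := fun j => l.getD j 0 with hp
  set c : ℕ → ℕ := fun j => (a.drop j).count (a.getD j d) with hc
  have hcle : ∀ j, c j ≤ n := by
    intro j
    calc c j ≤ (a.drop j).length := List.count_le_length
      _ ≤ a.length := by simp [List.length_drop]
      _ = n := hlen
  rw [coeffSum_eq_sum d a l hlen, hql, ← hn]
  have lhs_eq : ∑ j ∈ Finset.range n, p j * (c j : ℝ)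
      = ∑ v ∈ Finset.range n, ∑ j ∈ (Finset.range n).filter (fun j => v < c j), p j := by
    have e1 : ∀ j ∈ Finset.range n, p j * (c j : ℝ)
        = ∑ v ∈ Finset.range n, if v < c j then p j else 0 := by
      intro j hj
      rw [Finset.sum_ite, Finset.sum_const_zero, add_zero, Finset.sum_const]
      have hfe : (Finset.range n).filter (fun v => v < c j) = Finset.range (c j) := by
        ext v
        simp only [Finset.mem_filter, Finset.mem_range]
        have := hcle j
        omega
      rw [hfe, Finset.card_range, nsmul_eq_mul, mul_comm]
    rw [Finset.sum_congr rfl e1, Finset.sum_comm]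
    exact Finset.sum_congr rfl fun v _ => by rw [Finset.sum_filter]
  have rhs_eq : ∑ r ∈ Finset.range n, ((r / m + 1 : ℕ) : ℝ) * q.getD r 0
      = ∑ v ∈ Finset.range n, ∑ r ∈ (Finset.range n).filter (fun r => m * v ≤ r),
          q.getD r 0 := by
    have e1 : ∀ r ∈ Finset.range n, ((r / m + 1 : ℕ) : ℝ) * q.getD r 0
        = ∑ v ∈ Finset.range n, if m * v ≤ r then q.getD r 0 else 0 := by
      intro r hr
      rw [Finset.mem_range] at hr
      rw [Finset.sum_ite, Finset.sum_const_zero, add_zero, Finset.sum_const]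
      have hfe : (Finset.range n).filter (fun v => m * v ≤ r) = Finset.range (r / m + 1) := by
        ext v
        simp only [Finset.mem_filter, Finset.mem_range]
        constructor
        · rintro ⟨-, h⟩
          have : v ≤ r / m := (Nat.le_div_iff_mul_le hm).mpr (by rwa [Nat.mul_comm] at h)
          omega
        · intro h
          have hv : v ≤ r / m := by omega
          have h2 : v * m ≤ r := (Nat.le_div_iff_mul_le hm).mp hv
          have h2' : m * v ≤ r := by rwa [Nat.mul_comm] at h2
          have h3 : r / m ≤ r := Nat.div_le_self r m
          exact ⟨by omega, by omega⟩
      rw [hfe, Finset.card_range, nsmul_eq_mul, mul_comm]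
    rw [Finset.sum_congr rfl e1, Finset.sum_comm]
    exact Finset.sum_congr rfl fun v _ => by rw [Finset.sum_filter]
  have hsum_p : ∑ j ∈ Finset.range n, p j = l.sum := sum_range_getD l
  have hsum_q : ∑ r ∈ Finset.range n, q.getD r 0 = l.sum := by
    rw [← hql]; rw [sum_range_getD q, hsum]
  have level : ∀ v ∈ Finset.range n,
      ∑ r ∈ (Finset.range n).filter (fun r => m * v ≤ r), q.getD r 0
        ≤ ∑ j ∈ (Finset.range n).filter (fun j => v < c j), p j := by
    intro v _
    have hsplit : ∑ j ∈ (Finset.range n).filter (fun j => v < c j), p j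
          + ∑ j ∈ (Finset.range n).filter (fun j => ¬ v < c j), p j = l.sum := by
      rw [Finset.sum_filter_add_sum_filter_not]; exact hsum_p
    have hq_split : ∑ r ∈ (Finset.range n).filter (fun r => m * v ≤ r), q.getD r 0
          + ∑ r ∈ (Finset.range n).filter (fun r => ¬ m * v ≤ r), q.getD r 0 = l.sum := by
      rw [Finset.sum_filter_add_sum_filter_not]; exact hsum_q
    set B := (Finset.range n).filter (fun j => ¬ v < c j) with hB
    have hBcard : B.card ≤ m * v := by
      have heq : B = (Finset.range a.length).filter
          (fun j => (a.drop j).count (a.getD j ⟨0, hm⟩) ≤ v) := by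
        ext j
        simp only [hB, Finset.mem_filter, Finset.mem_range, not_lt, hc]
        rw [hlen, ← hd]
      rw [heq]
      exact coeff_card_le hm a v
    have hBsum : ∑ j ∈ B, p j ≤ (q.take (m * v)).sum := by
      have hmapl : (List.range n).map p = l := by
        apply List.ext_getElem (by simp [hn])
        intro i h1 h2
        rw [List.getElem_map, List.getElem_range, hp]
        exact getD_eq_getElem' l 0 h2
      have hNle : (B.val.map p) ≤ (q : Multiset ℝ) := by
        have h1 : B.val ≤ (Finset.range n).val :=
          Finset.val_le_iff.mpr (Finset.filter_subset _ _)
        have h2 : (B.val.map p) ≤ ((Finset.range n).val.map p) := Multiset.map_le_map h1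
        have h3 : ((Finset.range n).val.map p) = (l : Multiset ℝ) := by
          rw [Finset.range_val]
          show ((List.range n : Multiset ℕ).map p) = (l : Multiset ℝ)
          rw [Multiset.map_coe, hmapl]
        rw [h3] at h2
        exact h2.trans (le_of_eq (Multiset.coe_eq_coe.mpr hperm))
      have hb := top_sum_bound q hsort hpos (B.val.map p) hNle
      have hcard : Multiset.card (B.val.map p) = B.card := by
        rw [Multiset.card_map]; rfl
      rw [hcard] at hb
      calc ∑ j ∈ B, p j = (B.val.map p).sum := rfl
        _ ≤ (q.take B.card).sum := hb
        _ ≤ (q.take (m * v)).sum := sum_take_mono q hpos hBcard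
    have htake : ∑ r ∈ (Finset.range n).filter (fun r => ¬ m * v ≤ r), q.getD r 0
        = (q.take (m * v)).sum := by
      have hfe : (Finset.range n).filter (fun r => ¬ m * v ≤ r)
          = Finset.range (min (m * v) n) := by
        ext r
        simp only [Finset.mem_filter, Finset.mem_range, not_le, lt_min_iff]
        omega
      rw [hfe]
      have hminle : min (m * v) n ≤ q.length := by rw [hql]; omega
      have h1 := take_sum_eq q (min (m * v) n) hminle
      have h2 : q.take (min (m * v) n) = q.take (m * v) := by
        rcases le_total (m * v) n with h | h
        · rw [min_eq_left h]
        · rw [min_eq_right h, List.take_of_length_le (by omega),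
            List.take_of_length_le (by omega)]
      rw [← h1, h2]
    linarith
  rw [rhs_eq, lhs_eq]
  exact Finset.sum_le_sum level

end Core


section Glue

variable {m : ℕ}

lemma tc_zero_eq (hm : 0 < m) (l : List ℝ) :
    totalCompletion hm (fun _ => 0) l
      = coeffSum (assignSeq hm (fun _ => 0) l) l := by
  rw [tc_formula hm (fun _ => 0) l]
  simp

lemma tc_zero_nonneg (hm : 0 < m) (l : List ℝ) (hl : ∀ x ∈ l, 0 ≤ x) :
    0 ≤ totalCompletion hm (fun _ => 0) l := by
  rw [tc_zero_eq]
  exact coeffSum_nonneg _ _ hl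

lemma coeff_arith (k : ℕ) (hk : 0 < k) (r : ℕ) :
    1 + (r : ℝ) / k ≤ 3 * ((r / (2 * k) + 1 : ℕ) : ℝ) := by
  set D := r / (2 * k) with hD
  have h1 : r < (D + 1) * (2 * k) :=
    (Nat.div_lt_iff_lt_mul (show 0 < 2 * k by omega)).mp (Nat.lt_succ_self D)
  have h2 : (r : ℝ) < (D + 1) * (2 * k) := by exact_mod_cast h1
  have hk' : (0 : ℝ) < k := by exact_mod_cast hk
  have h3 : (r : ℝ) / k < 2 * (D + 1) := by
    rw [div_lt_iff₀ hk']
    nlinarith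
  have h4 : (1 : ℝ) ≤ (D : ℝ) + 1 := by
    have : (0:ℝ) ≤ (D:ℝ) := Nat.cast_nonneg D
    linarith
  push_cast
  nlinarith

end Glue


/-- the optimal total completion time on k machines is at most
3 times the optimal total completion time on 2k machines. -/
theorem stmt5 (k : ℕ) (hk : 0 < k) (J : Multiset ℝ) (hJ : ∀ s ∈ J, 0 ≤ s) :
    optTotalCompletion (m := k) hk J ≤
      3 * optTotalCompletion (m := 2 * k) (by omega) J := by
  classical
  have hk2 : 0 < 2 * k := by omega
  set lA := List.insertionSort (fun x y : ℝ => x ≤ y) J.toList with hlA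
  have hpermA : List.Perm lA J.toList := List.perm_insertionSort _ _
  have hAJ : (lA : Multiset ℝ) = J :=
    (Multiset.coe_eq_coe.mpr hpermA).trans (Multiset.coe_toList J)
  have hsortA : lA.Pairwise (· ≤ ·) := List.pairwise_insertionSort _ _
  set q := lA.reverse with hq
  have hsortq : q.Pairwise (· ≥ ·) := by
    rw [hq]
    exact List.pairwise_reverse.mpr hsortA
  have hqJ : (q : Multiset ℝ) = J := by
    rw [hq, Multiset.coe_reverse, hAJ]
  have hposA : ∀ e ∈ lA, 0 ≤ e := by
    intro e he
    apply hJ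
    rw [← hAJ]
    exact he
  have hposq : ∀ e ∈ q, 0 ≤ e := fun e he => hposA e (List.mem_reverse.mp he)
  set n := lA.length with hn
  have hqlen : q.length = n := by rw [hq, List.length_reverse]
  set target : ℝ := ∑ r ∈ Finset.range q.length,
    ((r / (2 * k) + 1 : ℕ) : ℝ) * q.getD r 0 with htarget
  -- Step (4): target ≤ opt on 2k machines
  have step4 : target ≤ optTotalCompletion (m := 2 * k) hk2 J := by
    apply le_csInf
    · exact ⟨totalCompletion hk2 (fun _ => 0) J.toList,
        J.toList, Multiset.coe_toList J, rfl⟩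
    · rintro C ⟨l', hl', rfl⟩
      rw [tc_zero_eq]
      apply core_lower hk2 q l' _ hsortq _ hposq (assignSeq_length _ _ _)
      exact Multiset.coe_eq_coe.mp (hl'.trans hqJ.symm)
  -- Step (1): opt on k machines ≤ TC of lA
  have step1 : optTotalCompletion (m := k) hk J ≤ totalCompletion hk (fun _ => 0) lA := by
    apply csInf_le
    · refine ⟨0, ?_⟩
      rintro C ⟨l', hl', rfl⟩
      have : ∀ x ∈ l', 0 ≤ x := by
        intro x hx
        apply hJ
        rw [← hl']
        exact hx
      exact tc_zero_nonneg hk l' this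
    · exact ⟨lA, hAJ, rfl⟩
  -- Step (2) and (3): TC of lA ≤ 3 * target
  have step23 : totalCompletion hk (fun _ => 0) lA ≤ 3 * target := by
    refine (tc_upper_zero hk lA).trans ?_
    have hrw : 3 * target = ∑ j ∈ Finset.range n,
        3 * (((n - 1 - j) / (2 * k) + 1 : ℕ) : ℝ) * lA.getD j 0 := by
      rw [htarget, hqlen, Finset.mul_sum]
      rw [← Finset.sum_range_reflect
        (fun r => 3 * ((((r / (2 * k) + 1 : ℕ)) : ℝ) * q.getD r 0)) n]
      refine Finset.sum_congr rfl fun j hj => ?_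
      rw [Finset.mem_range] at hj
      have hjq : n - 1 - j < q.length := by omega
      have hjA : j < lA.length := by omega
      have hgd : q.getD (n - 1 - j) 0 = lA.getD j 0 := by
        rw [List.getD_eq_getElem?_getD, List.getD_eq_getElem?_getD, hq,
          List.getElem?_reverse (by rw [hn] at hj ⊢; omega)]
        congr 2
        omega
      rw [hgd]
      ring
    rw [hrw, ← hn]
    refine Finset.sum_le_sum fun j hj => ?_
    rw [Finset.mem_range] at hj
    have hx : 0 ≤ lA.getD j 0 := by
      rcases lt_or_ge j lA.length with h | h
      · rw [getD_eq_getElem' lA 0 h]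
        exact hposA _ (List.getElem_mem h)
      · rw [List.getD_eq_getElem?_getD, List.getElem?_eq_none (by omega), Option.getD_none]
    have := coeff_arith k hk (n - 1 - j)
    calc lA.getD j 0 * (1 + ((n - 1 - j : ℕ) : ℝ) / k)
        ≤ lA.getD j 0 * (3 * (((n - 1 - j) / (2 * k) + 1 : ℕ) : ℝ)) := by
          exact mul_le_mul_of_nonneg_left this hx
      _ = 3 * (((n - 1 - j) / (2 * k) + 1 : ℕ) : ℝ) * lA.getD j 0 := by ring
  calc optTotalCompletion (m := k) hk J ≤ totalCompletion hk (fun _ => 0) lA := step1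
    _ ≤ 3 * target := step23
    _ ≤ 3 * optTotalCompletion (m := 2 * k) hk2 J := by linarith [step4]
end

section
/- Consider the list schedule of a finite list of jobs with nonnegative sizes on m ≥ 1 machines with zero initial loads, and let F be its free time. Then: (a) the minimum machine load is nondecreasing as the jobs are assigned one by one; (b) consequently every job is assigned to a machine whose load at the moment of assignment is at most F; and (c) every job of size at most τ has completion time at most F + τ, for any τ ≥ 0. -/
/-! Assigning a nonnegative job never lowers any machine's load, so the minimum load of a prefix
schedule is at most the free time. A job starts on a machine of minimum load, hence by time `F`,
and a job of size at most `τ` completes by `F + τ`. -/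

section ListScheduling

variable {m : ℕ} (hm : 0 < m)

lemma load_bestMachine_le (ℓ : Fin m → ℝ) (j : Fin m) : ℓ (bestMachine hm ℓ) ≤ ℓ j :=
  (Finset.mem_filter.mp (Finset.min'_mem (Finset.univ.filter fun i => ∀ j, ℓ i ≤ ℓ j) _)).2 j

lemma load_bestMachine_eq_inf' (ℓ : Fin m → ℝ) :
    ℓ (bestMachine hm ℓ) = Finset.univ.inf' ⟨⟨0, hm⟩, Finset.mem_univ _⟩ ℓ :=
  le_antisymm (Finset.le_inf' _ _ fun j _ => load_bestMachine_le hm ℓ j)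
    (Finset.inf'_le _ (Finset.mem_univ _))

lemma le_schedStep (ℓ : Fin m → ℝ) {s : ℝ} (hs : 0 ≤ s) : ℓ ≤ schedStep hm ℓ s := by
  intro i
  rcases eq_or_ne i (bestMachine hm ℓ) with rfl | hi
  · simpa [schedStep] using hs
  · simp [schedStep, hi]

lemma le_loadsAfter {l : List ℝ} (hl : ∀ s ∈ l, 0 ≤ s) (ℓ : Fin m → ℝ) :
    ℓ ≤ loadsAfter hm ℓ l := by
  induction l generalizing ℓ with
  | nil => exact le_rfl
  | cons s rest ih =>
    exact (le_schedStep hm ℓ (hl s List.mem_cons_self)).trans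
      (ih (fun x hx => hl x (List.mem_cons_of_mem s hx)) _)

lemma loadsAfter_append (ℓ : Fin m → ℝ) (l₁ l₂ : List ℝ) :
    loadsAfter hm ℓ (l₁ ++ l₂) = loadsAfter hm (loadsAfter hm ℓ l₁) l₂ := by
  induction l₁ generalizing ℓ with
  | nil => rfl
  | cons s rest ih => exact ih _

lemma loadsAfter_bestMachine_eq_freeTime (ℓ : Fin m → ℝ) (l : List ℝ) :
    loadsAfter hm ℓ l (bestMachine hm (loadsAfter hm ℓ l)) = freeTime hm ℓ l :=
  load_bestMachine_eq_inf' hm _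

lemma freeTime_le_freeTime_append (ℓ : Fin m → ℝ) (l₁ : List ℝ) {l₂ : List ℝ}
    (hl₂ : ∀ s ∈ l₂, 0 ≤ s) : freeTime hm ℓ l₁ ≤ freeTime hm ℓ (l₁ ++ l₂) := by
  rw [freeTime, freeTime, loadsAfter_append]
  exact Finset.inf'_mono_fun fun i _ => le_loadsAfter hm hl₂ _ i

lemma freeTime_take_mono {l : List ℝ} (hl : ∀ s ∈ l, 0 ≤ s) (ℓ : Fin m → ℝ) {t t' : ℕ}
    (htt' : t ≤ t') : freeTime hm ℓ (l.take t) ≤ freeTime hm ℓ (l.take t') := by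
  have hsplit : (l.take t').take t ++ (l.take t').drop t = l.take t' := List.take_append_drop _ _
  rw [List.take_take, min_eq_left htt'] at hsplit
  rw [← hsplit]
  exact freeTime_le_freeTime_append hm ℓ _ fun s hs =>
    hl s (List.mem_of_mem_take (List.mem_of_mem_drop hs))

lemma loadsAfter_take_bestMachine_le_freeTime {l : List ℝ} (hl : ∀ s ∈ l, 0 ≤ s)
    (ℓ : Fin m → ℝ) (t : ℕ) :
    loadsAfter hm ℓ (l.take t) (bestMachine hm (loadsAfter hm ℓ (l.take t))) ≤
      freeTime hm ℓ l := by
  rw [loadsAfter_bestMachine_eq_freeTime]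
  conv_rhs => rw [← List.take_append_drop t l]
  exact freeTime_le_freeTime_append hm ℓ _ fun s hs => hl s (List.mem_of_mem_drop hs)

end ListScheduling

theorem stmt17_general (m : ℕ) (hm : 0 < m) (jobs : List ℝ) (hjobs : ∀ s ∈ jobs, 0 ≤ s)
    (τ : ℝ) :
    (∀ t t', t ≤ t' → t' ≤ jobs.length →
      freeTime hm (fun _ => 0) (jobs.take t) ≤
        freeTime hm (fun _ => 0) (jobs.take t')) ∧
    (∀ t, t < jobs.length →
      loadsAfter hm (fun _ => 0) (jobs.take t)
          (bestMachine hm (loadsAfter hm (fun _ => 0) (jobs.take t))) ≤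
        freeTime hm (fun _ => 0) jobs) ∧
    (∀ t, t < jobs.length → jobs.getD t 0 ≤ τ →
      loadsAfter hm (fun _ => 0) (jobs.take t)
          (bestMachine hm (loadsAfter hm (fun _ => 0) (jobs.take t))) +
        jobs.getD t 0 ≤ freeTime hm (fun _ => 0) jobs + τ) := by
  have start_le := loadsAfter_take_bestMachine_le_freeTime hm hjobs (fun _ => 0)
  refine ⟨fun t t' htt' _ => freeTime_take_mono hm hjobs _ htt', fun t _ => start_le t,
    fun t _ hsize => ?_⟩
  linarith [start_le t]

/-- (a) the minimum machine load is nondecreasing as jobs are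
assigned; (b) every job is assigned to a machine of load at most F at the
moment of assignment; (c) every job of size at most τ completes by F + τ. -/
theorem stmt17 (m : ℕ) (hm : 0 < m) (jobs : List ℝ) (hjobs : ∀ s ∈ jobs, 0 ≤ s)
    (τ : ℝ) (hτ : 0 ≤ τ) :
    (∀ t t', t ≤ t' → t' ≤ jobs.length →
      freeTime hm (fun _ => 0) (jobs.take t) ≤
        freeTime hm (fun _ => 0) (jobs.take t')) ∧
    (∀ t, t < jobs.length →
      loadsAfter hm (fun _ => 0) (jobs.take t)
          (bestMachine hm (loadsAfter hm (fun _ => 0) (jobs.take t))) ≤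
        freeTime hm (fun _ => 0) jobs) ∧
    (∀ t, t < jobs.length → jobs.getD t 0 ≤ τ →
      loadsAfter hm (fun _ => 0) (jobs.take t)
          (bestMachine hm (loadsAfter hm (fun _ => 0) (jobs.take t))) +
        jobs.getD t 0 ≤ freeTime hm (fun _ => 0) jobs + τ) :=
  stmt17_general m hm jobs hjobs τ
end
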